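/- arXiv:1111.2289 — 8 statements merged into one kernel-verified Lean document; each statement's English description precedes it below -/
import Mathlib

section
/- Let A be an associative (not necessarily unital) algebra over a field of characteristic 3, and define the commutator [x,y] = x*y - y*x. Then for all a₁, a₂, a₃ ∈ A, the identity a₁a₂a₃ + a₁a₃a₂ + a₂a₁a₃ + a₂a₃a₁ + a₃a₁a₂ + a₃a₂a₁ = 0 holds if and only if [[a₁,a₂],a₃] + [[a₁,a₃],a₂] = 0 holds for all a₁, a₂, a₃ ∈ A. -/
theorem stmt_0 (K A : Type*) [Field K] [CharP K 3] [NonUnitalRing A]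
    [Module K A] [IsScalarTower K A A] [SMulCommClass K A A] :
    (∀ a₁ a₂ a₃ : A,
        a₁*a₂*a₃ + a₁*a₃*a₂ + a₂*a₁*a₃ + a₂*a₃*a₁ + a₃*a₁*a₂ + a₃*a₂*a₁ = 0) ↔
    (∀ a₁ a₂ a₃ : A,
        ((a₁*a₂ - a₂*a₁)*a₃ - a₃*(a₁*a₂ - a₂*a₁)) +
        ((a₁*a₃ - a₃*a₁)*a₂ - a₂*(a₁*a₃ - a₃*a₁)) = 0) := by
  have h3 : ∀ x : A, x + x + x = 0 := by
    intro x
    have h : ((3 : ℕ) : K) • x = (3 : ℕ) • x := Nat.cast_smul_eq_nsmul K 3 x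
    rw [CharP.cast_eq_zero K 3, zero_smul] at h
    simpa [succ_nsmul, two_nsmul, add_assoc] using h.symm
  constructor
  · intro h a₁ a₂ a₃
    have hs := h a₁ a₂ a₃
    have hu := h3 (a₂*a₁*a₃ + a₃*a₁*a₂)
    have key : ((a₁*a₂ - a₂*a₁)*a₃ - a₃*(a₁*a₂ - a₂*a₁)) +
        ((a₁*a₃ - a₃*a₁)*a₂ - a₂*(a₁*a₃ - a₃*a₁)) =
        (a₁*a₂*a₃ + a₁*a₃*a₂ + a₂*a₁*a₃ + a₂*a₃*a₁ + a₃*a₁*a₂ + a₃*a₂*a₁) -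
        ((a₂*a₁*a₃ + a₃*a₁*a₂) + (a₂*a₁*a₃ + a₃*a₁*a₂) + (a₂*a₁*a₃ + a₃*a₁*a₂)) := by
      noncomm_ring
    rw [key, hs, hu, sub_zero]
  · intro h a₁ a₂ a₃
    have hs := h a₁ a₂ a₃
    have hu := h3 (a₂*a₁*a₃ + a₃*a₁*a₂)
    have key : a₁*a₂*a₃ + a₁*a₃*a₂ + a₂*a₁*a₃ + a₂*a₃*a₁ + a₃*a₁*a₂ + a₃*a₂*a₁ =
        (((a₁*a₂ - a₂*a₁)*a₃ - a₃*(a₁*a₂ - a₂*a₁)) +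
        ((a₁*a₃ - a₃*a₁)*a₂ - a₂*(a₁*a₃ - a₃*a₁))) +
        ((a₂*a₁*a₃ + a₃*a₁*a₂) + (a₂*a₁*a₃ + a₃*a₁*a₂) + (a₂*a₁*a₃ + a₃*a₁*a₂)) := by
      noncomm_ring
    rw [key, hs, hu, add_zero]
end

section
/- Let L be a Lie algebra over a field of characteristic different from 3. If L satisfies the identity [[a₁,a₂],a₃] + [[a₁,a₃],a₂] = 0 for all a₁, a₂, a₃ ∈ L, then [[a₁,a₂],a₃] = 0 for all a₁, a₂, a₃ ∈ L, i.e., L is two-step nilpotent. -/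
theorem stmt_4 (K L : Type*) [Field K] (h3 : (3 : K) ≠ 0)
    [LieRing L] [LieAlgebra K L]
    (hid : ∀ a₁ a₂ a₃ : L, ⁅⁅a₁, a₂⁆, a₃⁆ + ⁅⁅a₁, a₃⁆, a₂⁆ = 0) :
    ∀ a₁ a₂ a₃ : L, ⁅⁅a₁, a₂⁆, a₃⁆ = 0 := by
  have hflip : ∀ x y : L, ⁅x, y⁆ = -⁅y, x⁆ := fun x y => (lie_skew x y).symm
  -- first-two antisymmetry of the triple bracket
  have hsw : ∀ x y z : L, ⁅⁅y, x⁆, z⁆ = -⁅⁅x, y⁆, z⁆ := by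
    intro x y z
    rw [← neg_lie, lie_skew]
  -- cyclic invariance
  have hcyc : ∀ x y z : L, ⁅⁅y, z⁆, x⁆ = ⁅⁅x, y⁆, z⁆ := by
    intro x y z
    have h1 := eq_neg_of_add_eq_zero_left (hid y z x)
    rw [h1, hsw y x z]
  -- it suffices to kill each triple bracket; from Jacobi we get 3 • (triple) = 0
  intro a b c
  have hjac := lie_jacobi a b c
  rw [hflip a ⁅b, c⁆, hflip b ⁅c, a⁆, hflip c ⁅a, b⁆] at hjac
  rw [hcyc a b c, hcyc c a b, ← neg_add, ← neg_add, neg_eq_zero] at hjac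
  -- hjac : ⁅⁅c, a⁆, b⁆ + ⁅⁅c, a⁆, b⁆ + ⁅⁅c, a⁆, b⁆ = 0
  have hK : (3 : K) • ⁅⁅c, a⁆, b⁆ = 0 := by
    rw [show (3 : K) = 1 + 1 + 1 by norm_num, add_smul, add_smul, one_smul]
    exact hjac
  have hz : ⁅⁅c, a⁆, b⁆ = 0 := by
    rcases smul_eq_zero.mp hK with h | h
    · exact absurd h h3
    · exact h
  rw [← hcyc a b c, ← hcyc b c a]
  exact hz
end

section
/- Let V be a module over a commutative ring with a symmetric bilinear product x·y and an antisymmetric bilinear bracket [x,y] satisfying the identity (a₁·a₂)·a₃ − a₁·(a₂·a₃) = [a₂,[a₁,a₃]] for all elements. Then the bracket satisfies the Jacobi identity: [a₁,[a₂,a₃]] + [a₂,[a₃,a₁]] + [a₃,[a₁,a₂]] = 0 for all a₁, a₂, a₃ ∈ V. -/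
theorem stmt_9 (R V : Type*) [CommRing R] [AddCommGroup V] [Module R V]
    (M : V →ₗ[R] V →ₗ[R] V) (B : V →ₗ[R] V →ₗ[R] V)
    (hsym : ∀ x y : V, M x y = M y x)
    (hanti : ∀ x y : V, B x y = - B y x)
    (hid : ∀ a₁ a₂ a₃ : V, M (M a₁ a₂) a₃ - M a₁ (M a₂ a₃) = B a₂ (B a₁ a₃)) :
    ∀ a₁ a₂ a₃ : V, B a₁ (B a₂ a₃) + B a₂ (B a₃ a₁) + B a₃ (B a₁ a₂) = 0 := by
  intro a b c
  have key : B b (B a c) + B c (B b a) + B a (B c b) = 0 := by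
    rw [← hid a b c, ← hid b c a, ← hid c a b, hsym (M a b) c, hsym (M b c) a,
      hsym (M c a) b]
    abel
  rw [hanti a c, hanti b a, hanti c b, map_neg, map_neg, map_neg] at key
  linear_combination (norm := abel) -key
end

section
/- Let A be an associative algebra over a commutative ring satisfying [[x,y],z] = 0 for all x, y, z ∈ A, where [x,y] = xy − yx. Then for all a₁, a₂, a₃, a₄ ∈ A: [a₁,a₄]·[a₂,a₃] + [a₁,a₃]·[a₂,a₄] = 0 and [a₁,a₃]·[a₂,a₄] + [a₁,a₂]·[a₃,a₄] = 0, where x·y = xy + yx. -/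
theorem stmt_12 (R A : Type*) [CommRing R] [NonUnitalRing A]
    [Module R A] [IsScalarTower R A A] [SMulCommClass R A A]
    (h : ∀ x y z : A, (x*y - y*x)*z - z*(x*y - y*x) = 0)
    (a₁ a₂ a₃ a₄ : A) :
    ((a₁*a₄ - a₄*a₁)*(a₂*a₃ - a₃*a₂) + (a₂*a₃ - a₃*a₂)*(a₁*a₄ - a₄*a₁)) +
      ((a₁*a₃ - a₃*a₁)*(a₂*a₄ - a₄*a₂) + (a₂*a₄ - a₄*a₂)*(a₁*a₃ - a₃*a₁)) = 0 ∧
    ((a₁*a₃ - a₃*a₁)*(a₂*a₄ - a₄*a₂) + (a₂*a₄ - a₄*a₂)*(a₁*a₃ - a₃*a₁)) +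
      ((a₁*a₂ - a₂*a₁)*(a₃*a₄ - a₄*a₃) + (a₃*a₄ - a₄*a₃)*(a₁*a₂ - a₂*a₁)) = 0 := by
  have comm : ∀ x y z : A, (x*y - y*x)*z = z*(x*y - y*x) :=
    fun x y z => sub_eq_zero.mp (h x y z)
  have key : ∀ a b c d : A,
      (a*b - b*a)*(c*d - d*c) + (a*c - c*a)*(b*d - d*b) = 0 := by
    intro a b c d
    have e : (a*b - b*a)*(c*d - d*c) + (a*c - c*a)*(b*d - d*b)
        = (((a*c - c*a)*b - b*(a*c - c*a))*d
            - ((a*c - c*a)*d - d*(a*c - c*a))*b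
            - d*((a*c - c*a)*b - b*(a*c - c*a))
            - ((a*b - b*a)*d - d*(a*b - b*a))*c)
          + ((a*(b*c) - (b*c)*a)*d - d*(a*(b*c) - (b*c)*a)) := by
      noncomm_ring
    rw [e, h a c b, h a c d, h a b d, h a (b*c) d]
    simp
  constructor
  · have k := key a₁ a₄ a₃ a₂
    have hPQ : (a₁*a₄ - a₄*a₁)*(a₂*a₃ - a₃*a₂)
        + (a₁*a₃ - a₃*a₁)*(a₂*a₄ - a₄*a₂) = 0 := by
      have e : (a₁*a₄ - a₄*a₁)*(a₂*a₃ - a₃*a₂)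
          + (a₁*a₃ - a₃*a₁)*(a₂*a₄ - a₄*a₂)
          = -((a₁*a₄ - a₄*a₁)*(a₃*a₂ - a₂*a₃)
            + (a₁*a₃ - a₃*a₁)*(a₄*a₂ - a₂*a₄)) := by noncomm_ring
      rw [e, k, neg_zero]
    rw [comm a₂ a₃ (a₁*a₄ - a₄*a₁), comm a₂ a₄ (a₁*a₃ - a₃*a₁)]
    have e2 : (a₁*a₄ - a₄*a₁)*(a₂*a₃ - a₃*a₂) + (a₁*a₄ - a₄*a₁)*(a₂*a₃ - a₃*a₂)
        + ((a₁*a₃ - a₃*a₁)*(a₂*a₄ - a₄*a₂) + (a₁*a₃ - a₃*a₁)*(a₂*a₄ - a₄*a₂))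
        = ((a₁*a₄ - a₄*a₁)*(a₂*a₃ - a₃*a₂) + (a₁*a₃ - a₃*a₁)*(a₂*a₄ - a₄*a₂))
          + ((a₁*a₄ - a₄*a₁)*(a₂*a₃ - a₃*a₂) + (a₁*a₃ - a₃*a₁)*(a₂*a₄ - a₄*a₂)) := by
      abel
    rw [e2, hPQ, add_zero]
  · have k := key a₁ a₃ a₂ a₄
    rw [comm a₂ a₄ (a₁*a₃ - a₃*a₁), comm a₃ a₄ (a₁*a₂ - a₂*a₁)]
    have e2 : (a₁*a₃ - a₃*a₁)*(a₂*a₄ - a₄*a₂) + (a₁*a₃ - a₃*a₁)*(a₂*a₄ - a₄*a₂)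
        + ((a₁*a₂ - a₂*a₁)*(a₃*a₄ - a₄*a₃) + (a₁*a₂ - a₂*a₁)*(a₃*a₄ - a₄*a₃))
        = ((a₁*a₃ - a₃*a₁)*(a₂*a₄ - a₄*a₂) + (a₁*a₂ - a₂*a₁)*(a₃*a₄ - a₄*a₃))
          + ((a₁*a₃ - a₃*a₁)*(a₂*a₄ - a₄*a₂) + (a₁*a₂ - a₂*a₁)*(a₃*a₄ - a₄*a₃)) := by
      abel
    rw [e2, k, add_zero]
end

section
/- Let A be an associative algebra over a field of characteristic 3 satisfying the identity a₁a₂a₃ + a₁a₃a₂ + a₂a₁a₃ + a₂a₃a₁ + a₃a₁a₂ + a₃a₂a₁ = 0. Then with [x,y] = xy − yx, the quadruple commutator vanishes: [a₁,[a₂,[a₃,a₄]]] = 0 for all a₁, a₂, a₃, a₄ ∈ A. -/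
def cbr {A : Type*} [NonUnitalRing A] (x y : A) : A := x*y - y*x

theorem stmt_13 (K A : Type*) [Field K] [CharP K 3] [NonUnitalRing A]
    [Module K A] [IsScalarTower K A A] [SMulCommClass K A A]
    (hid : ∀ a₁ a₂ a₃ : A,
      a₁*a₂*a₃ + a₁*a₃*a₂ + a₂*a₁*a₃ + a₂*a₃*a₁ + a₃*a₁*a₂ + a₃*a₂*a₁ = 0) :
    ∀ a₁ a₂ a₃ a₄ : A, cbr a₁ (cbr a₂ (cbr a₃ a₄)) = 0 := by
  have h3 : ∀ x : A, x + x + x = 0 := by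
    intro x
    have h1 : ((3 : ℕ) : K) • x = (3 : ℕ) • x := Nat.cast_smul_eq_nsmul K 3 x
    have h2 : ((3 : ℕ) : K) = 0 := by
      exact_mod_cast CharP.cast_eq_zero K 3
    rw [h2, zero_smul] at h1
    calc x + x + x = (3 : ℕ) • x := by rw [show (3:ℕ) = 2 + 1 from rfl, add_nsmul, two_nsmul, one_nsmul]
    _ = 0 := h1.symm
  intro a b c d
  have key : cbr a (cbr b (cbr c d)) =
      (a * (b*c*d + b*d*c + c*b*d + c*d*b + d*b*c + d*c*b)) + (a * (b*c*d + b*d*c + c*b*d + c*d*b + d*b*c + d*c*b)) + ((b*c*d + b*d*c + c*b*d + c*d*b + d*b*c + d*c*b) * a) + (b * (a*c*d + a*d*c + c*a*d + c*d*a + d*a*c + d*c*a)) + ((a*c*d + a*d*c + c*a*d + c*d*a + d*a*c + d*c*a) * b) + ((a*c*d + a*d*c + c*a*d + c*d*a + d*a*c + d*c*a) * b) + (c * (a*b*d + a*d*b + b*a*d + b*d*a + d*a*b + d*b*a)) + (c * (a*b*d + a*d*b + b*a*d + b*d*a + d*a*b + d*b*a)) + ((a*b*d + a*d*b + b*a*d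 + b*d*a + d*a*b + d*b*a) * c) + (((a*b)*c*d + (a*b)*d*c + c*(a*b)*d + c*d*(a*b) + d*(a*b)*c + d*c*(a*b))) + (((a*b)*c*d + (a*b)*d*c + c*(a*b)*d + c*d*(a*b) + d*(a*b)*c + d*c*(a*b))) + (((a*c)*b*d + (a*c)*d*b + b*(a*c)*d + b*d*(a*c) + d*(a*c)*b + d*b*(a*c))) + (((b*a)*c*d + (b*a)*d*c + c*(b*a)*d + c*d*(b*a) + d*(b*a)*c + d*c*(b*a))) + (((c*a)*b*d + (c*a)*d*b + b*(c*a)*d + b*d*(c*a) + d*(c*a)*b + d*b*(c*a))) + (((c*a)*b*d + (c*a)*d*b + b*(c*a)*d + b*d*(c*a) + d*(c*a)*b + d*b*(c*a))) - (a*b*c*d + a*b*c*d + a*b*c*d) - (a*b*d*c + a*b*d*c + a*b*d*c) - (a*b*d*c + a*b*d*c + a*b*d*c) - (a*c*b*d + a*c*b*d + a*c*b*d) - (a*c*d*b + a*c*d*b + a*c*d*b) - (a*c*d*b + a*c*d*b + a*c*d*b) - (a*d*b*c + a*d*b*c + a*d*b*c) - (a*d*c*b + a*d*c*b + a*d*c*b)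 - (b*a*c*d + b*a*c*d + b*a*c*d) - (b*a*d*c + b*a*d*c + b*a*d*c) - (b*c*a*d + b*c*a*d + b*c*a*d) - (b*c*d*a + b*c*d*a + b*c*d*a) - (b*d*a*c + b*d*a*c + b*d*a*c) - (b*d*c*a + b*d*c*a + b*d*c*a) - (c*a*b*d + c*a*b*d + c*a*b*d) - (c*a*b*d + c*a*b*d + c*a*b*d) - (c*a*d*b + c*a*d*b + c*a*d*b) - (c*a*d*b + c*a*d*b + c*a*d*b) - (c*b*a*d + c*b*a*d + c*b*a*d) - (c*b*d*a + c*b*d*a + c*b*d*a) - (c*d*a*b + c*d*a*b + c*d*a*b) - (c*d*a*b + c*d*a*b + c*d*a*b) - (c*d*b*a + c*d*b*a + c*d*b*a) - (d*a*b*c + d*a*b*c + d*a*b*c) - (d*a*c*b + d*a*c*b + d*a*c*b) - (d*b*a*c + d*b*a*c + d*b*a*c) - (d*b*c*a + d*b*c*a + d*b*c*a) - (d*c*a*b + d*c*a*b + d*c*a*b) - (d*c*a*b + d*c*a*b + d*c*a*b) - (d*c*b*a + d*c*b*a + d*c*b*a) := by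
    unfold cbr
    simp only [mul_add, add_mul, mul_sub, sub_mul, mul_assoc]
    abel
  rw [hid b c d, hid a c d, hid a b d, hid (a*b) c d, hid (a*c) b d, hid (b*a) c d, hid (c*a) b d, h3 (a*b*c*d), h3 (a*b*d*c), h3 (a*c*b*d), h3 (a*c*d*b), h3 (a*d*b*c), h3 (a*d*c*b), h3 (b*a*c*d), h3 (b*a*d*c), h3 (b*c*a*d), h3 (b*c*d*a), h3 (b*d*a*c), h3 (b*d*c*a), h3 (c*a*b*d), h3 (c*a*d*b), h3 (c*b*a*d), h3 (c*b*d*a), h3 (c*d*a*b), h3 (c*d*b*a), h3 (d*a*b*c), h3 (d*a*c*b), h3 (d*b*a*c), h3 (d*b*c*a), h3 (d*c*a*b), h3 (d*c*b*a)] at key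
  simpa using key
end

section
/- Let A be an associative algebra over a field of characteristic not 2, with x·y = (xy+yx)/2 and [x,y] = (xy−yx)/2, satisfying the identity [[a₁,a₂],a₃] + [[a₁,a₃],a₂] = 0. Then A satisfies the 'restricted associativity' identity a₁·(a₂·[a₃,a₄]) = (a₁·[a₃,a₄])·a₂ for all a₁, a₂, a₃, a₄ ∈ A. -/
noncomputable def dot (K : Type*) {A : Type*} [Field K] [NonUnitalRing A] [Module K A]
    (x y : A) : A := (2 : K)⁻¹ • (x*y + y*x)

noncomputable def br (K : Type*) {A : Type*} [Field K] [NonUnitalRing A] [Module K A]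
    (x y : A) : A := (2 : K)⁻¹ • (x*y - y*x)

/-- `cW x y z = [[x,y],z]` with ring commutators. -/
def cW {A : Type*} [NonUnitalRing A] (x y z : A) : A :=
  (x*y - y*x)*z - z*(x*y - y*x)

lemma cW_cyc {A : Type*} [NonUnitalRing A]
    (h0 : ∀ x y z : A, cW x y z + cW x z y = 0) (x y z : A) :
    cW x y z = cW z x y := by
  have e1 : cW x y z = -(cW x z y) := eq_neg_of_add_eq_zero_left (h0 x y z)
  have h2 : cW x z y = -(cW z x y) := by simp only [cW]; noncomm_ring
  rw [e1, h2, neg_neg]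

lemma R_lemma {A : Type*} [NonUnitalRing A]
    (h0 : ∀ x y z : A, cW x y z + cW x z y = 0) (a b c d : A) :
    (a*d - d*a)*(b*c - c*b) + (a*c - c*a)*(b*d - d*b) = 0 := by
  have k1 := cW_cyc h0 c d (a*b)
  have k2 := cW_cyc h0 c d b
  have k3 := cW_cyc h0 c d a
  have key : (a*d - d*a)*(b*c - c*b) + (a*c - c*a)*(b*d - d*b)
      = (cW (a*b) c d - cW c d (a*b)) - a*(cW b c d - cW c d b)
        - (cW a c d - cW c d a)*b := by
    simp only [cW]; noncomm_ring
  rw [key, k1, k2, k3]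
  simp

lemma comm_lemma {A : Type*} [NonUnitalRing A]
    (h0 : ∀ x y z : A, cW x y z + cW x z y = 0) (a b c d : A) :
    (a*b - b*a)*(c*d - d*c) = (c*d - d*c)*(a*b - b*a) := by
  have E1 := R_lemma h0 a c d b
  have E2 := R_lemma h0 a b c d
  have E3 := R_lemma h0 c b d a
  have key : (a*b - b*a)*(c*d - d*c) - (c*d - d*c)*(a*b - b*a)
      = ((a*b - b*a)*(c*d - d*c) + (a*d - d*a)*(c*b - b*c))
        + ((a*d - d*a)*(b*c - c*b) + (a*c - c*a)*(b*d - d*b))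
        + ((c*a - a*c)*(b*d - d*b) + (c*d - d*c)*(b*a - a*b)) := by
    noncomm_ring
  rw [E1, E2, E3] at key
  simp only [add_zero] at key
  exact sub_eq_zero.mp key

lemma dot_smul_right (K : Type*) {A : Type*} [Field K] [NonUnitalRing A] [Module K A]
    [IsScalarTower K A A] [SMulCommClass K A A] (s : K) (x y : A) :
    dot K x (s • y) = s • dot K x y := by
  simp only [dot, mul_smul_comm, smul_mul_assoc, smul_add, smul_smul, mul_comm]

lemma dot_smul_left (K : Type*) {A : Type*} [Field K] [NonUnitalRing A] [Module K A]
    [IsScalarTower K A A] [SMulCommClass K A A] (s : K) (x y : A) :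
    dot K (s • x) y = s • dot K x y := by
  simp only [dot, mul_smul_comm, smul_mul_assoc, smul_add, smul_smul, mul_comm]

theorem stmt_15 (K A : Type*) [Field K] (h2 : (2 : K) ≠ 0)
    [NonUnitalRing A] [Module K A] [IsScalarTower K A A] [SMulCommClass K A A]
    (hid : ∀ a b c : A, br K (br K a b) c + br K (br K a c) b = 0)
    (a₁ a₂ a₃ a₄ : A) :
    dot K a₁ (dot K a₂ (br K a₃ a₄)) = dot K (dot K a₁ (br K a₃ a₄)) a₂ := by
  have h2i : ((2:K)⁻¹ : K) ≠ 0 := inv_ne_zero h2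
  -- extract the commutator identity without scalars
  have h0 : ∀ x y z : A, cW x y z + cW x z y = 0 := by
    intro x y z
    have h := hid x y z
    simp only [br, smul_mul_assoc, mul_smul_comm, ← smul_sub, smul_smul,
      ← smul_add] at h
    rcases smul_eq_zero.mp h with h' | h'
    · exact absurd h' (mul_ne_zero (inv_ne_zero h2) (inv_ne_zero h2))
    · simpa [cW] using h'
  set C : A := a₃*a₄ - a₄*a₃ with hC
  have hcomm : (a₁*a₂ - a₂*a₁) * C = C * (a₁*a₂ - a₂*a₁) :=
    comm_lemma h0 a₁ a₂ a₃ a₄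
  set M : A := a₂*C + C*a₂ with hM
  set N : A := a₁*C + C*a₁ with hN
  have main : a₁*M + M*a₁ = N*a₂ + a₂*N := by
    have key : (a₁*M + M*a₁) - (N*a₂ + a₂*N)
        = (a₁*a₂ - a₂*a₁) * C - C * (a₁*a₂ - a₂*a₁) := by
      rw [hM, hN]; noncomm_ring
    have : (a₁*M + M*a₁) - (N*a₂ + a₂*N) = 0 := by rw [key, hcomm, sub_self]
    exact sub_eq_zero.mp this
  have hbr : br K a₃ a₄ = (2:K)⁻¹ • C := rfl
  have hd2 : dot K a₂ C = (2:K)⁻¹ • M := rfl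
  have hd1 : dot K a₁ C = (2:K)⁻¹ • N := rfl
  calc dot K a₁ (dot K a₂ (br K a₃ a₄))
      = (2:K)⁻¹ • ((2:K)⁻¹ • dot K a₁ M) := by
        rw [hbr, dot_smul_right, hd2, dot_smul_right, dot_smul_right]
    _ = (2:K)⁻¹ • ((2:K)⁻¹ • dot K N a₂) := by
        rw [show dot K a₁ M = dot K N a₂ from by
          simp only [dot, main]]
    _ = dot K (dot K a₁ (br K a₃ a₄)) a₂ := by
        rw [hbr, dot_smul_right, hd1, dot_smul_left, dot_smul_left]
end

section
/- Let A be an associative algebra over a field of characteristic 3 satisfying the dual alternative identity (full symmetrization of the triple product vanishes). Then, with [x,y] = xy − yx and x∘y = xy + yx, for all a₁, a₂, a₃, a₄ in A we have [a₁,a₄]∘[a₂,a₃] + [a₁,a₃]∘[a₂,a₄] = 0 and [a₁,a₃]∘[a₂,a₄] + [a₁,a₂]∘[a₃,a₄] = 0. -/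
def acirc {A : Type*} [NonUnitalRing A] (x y : A) : A := x*y + y*x

theorem stmt_16 (K A : Type*) [Field K] [CharP K 3] [NonUnitalRing A]
    [Module K A] [IsScalarTower K A A] [SMulCommClass K A A]
    (hid : ∀ a₁ a₂ a₃ : A,
      a₁*a₂*a₃ + a₁*a₃*a₂ + a₂*a₁*a₃ + a₂*a₃*a₁ + a₃*a₁*a₂ + a₃*a₂*a₁ = 0)
    (a₁ a₂ a₃ a₄ : A) :
    acirc (cbr a₁ a₄) (cbr a₂ a₃) + acirc (cbr a₁ a₃) (cbr a₂ a₄) = 0 ∧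
    acirc (cbr a₁ a₃) (cbr a₂ a₄) + acirc (cbr a₁ a₂) (cbr a₃ a₄) = 0 := by
  have h3 : ∀ x : A, x + x + x = 0 := by
    intro x
    have h : ((3:ℕ):K) • x = (3:ℕ) • x := Nat.cast_smul_eq_nsmul K 3 x
    have h0 : ((3:ℕ):K) = 0 := by exact_mod_cast CharP.cast_eq_zero K 3
    rw [h0, zero_smul] at h
    have := h.symm
    rw [show (3:ℕ) • x = x + x + x by rw [succ_nsmul, two_nsmul]] at this
    exact this
  have keyt1 : acirc (cbr a₁ a₄) (cbr a₂ a₃) + acirc (cbr a₁ a₃) (cbr a₂ a₄) = 0 := by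
    have e : acirc (cbr a₁ a₄) (cbr a₂ a₃) + acirc (cbr a₁ a₃) (cbr a₂ a₄) = a₁*(a₂*a₃*a₄ + a₂*a₄*a₃ + a₃*a₂*a₄ + a₃*a₄*a₂ + a₄*a₂*a₃ + a₄*a₃*a₂) + (a₂*a₃*a₄ + a₂*a₄*a₃ + a₃*a₂*a₄ + a₃*a₄*a₂ + a₄*a₂*a₃ + a₄*a₃*a₂)*a₁ + a₂*(a₁*a₃*a₄ + a₁*a₄*a₃ + a₃*a₁*a₄ + a₃*a₄*a₁ + a₄*a₁*a₃ + a₄*a₃*a₁) + (a₁*a₃*a₄ + a₁*a₄*a₃ + a₃*a₁*a₄ + a₃*a₄*a₁ + a₄*a₁*a₃ + a₄*a₃*a₁)*a₂ + ((a₁*a₂)*a₃*a₄ + (a₁*a₂)*a₄*a₃ + a₃*(a₁*a₂)*a₄ + a₃*a₄*(a₁*a₂) + a₄*(a₁*a₂)*a₃ + a₄*a₃*(a₁*a₂)) + ((a₁*a₂)*a₃*a₄ + (a₁*a₂)*a₄*a₃ + a₃*(a₁*a₂)*a₄ + a₃*a₄*(a₁*a₂) + a₄*(a₁*a₂)*a₃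 + a₄*a₃*(a₁*a₂)) + ((a₂*a₁)*a₃*a₄ + (a₂*a₁)*a₄*a₃ + a₃*(a₂*a₁)*a₄ + a₃*a₄*(a₂*a₁) + a₄*(a₂*a₁)*a₃ + a₄*a₃*(a₂*a₁)) + ((a₂*a₁)*a₃*a₄ + (a₂*a₁)*a₄*a₃ + a₃*(a₂*a₁)*a₄ + a₃*a₄*(a₂*a₁) + a₄*(a₂*a₁)*a₃ + a₄*a₃*(a₂*a₁)) + (-(a₁*a₄*a₃*a₂ + a₄*a₁*a₂*a₃ + a₂*a₃*a₄*a₁ + a₃*a₂*a₁*a₄ + a₁*a₃*a₄*a₂ + a₃*a₁*a₂*a₄ + a₂*a₄*a₃*a₁ + a₄*a₂*a₁*a₃ + a₁*a₂*a₃*a₄ + a₁*a₂*a₄*a₃ + a₃*a₄*a₂*a₁ + a₄*a₃*a₂*a₁ + a₂*a₁*a₃*a₄ + a₂*a₁*a₄*a₃ + a₃*a₄*a₁*a₂ + a₄*a₃*a₁*a₂) + -(a₁*a₄*a₃*a₂ + a₄*a₁*a₂*a₃ + a₂*a₃*a₄*a₁ + a₃*a₂*a₁*a₄ + a₁*a₃*a₄*a₂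 + a₃*a₁*a₂*a₄ + a₂*a₄*a₃*a₁ + a₄*a₂*a₁*a₃ + a₁*a₂*a₃*a₄ + a₁*a₂*a₄*a₃ + a₃*a₄*a₂*a₁ + a₄*a₃*a₂*a₁ + a₂*a₁*a₃*a₄ + a₂*a₁*a₄*a₃ + a₃*a₄*a₁*a₂ + a₄*a₃*a₁*a₂) + -(a₁*a₄*a₃*a₂ + a₄*a₁*a₂*a₃ + a₂*a₃*a₄*a₁ + a₃*a₂*a₁*a₄ + a₁*a₃*a₄*a₂ + a₃*a₁*a₂*a₄ + a₂*a₄*a₃*a₁ + a₄*a₂*a₁*a₃ + a₁*a₂*a₃*a₄ + a₁*a₂*a₄*a₃ + a₃*a₄*a₂*a₁ + a₄*a₃*a₂*a₁ + a₂*a₁*a₃*a₄ + a₂*a₁*a₄*a₃ + a₃*a₄*a₁*a₂ + a₄*a₃*a₁*a₂)) := by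
      simp only [acirc, cbr]
      noncomm_ring
    rw [e, hid a₂ a₃ a₄, hid a₁ a₃ a₄, hid (a₁*a₂) a₃ a₄, hid (a₂*a₁) a₃ a₄]
    simp only [mul_zero, zero_mul, add_zero, zero_add]
    rw [h3]
  have keyt2 : acirc (cbr a₁ a₃) (cbr a₂ a₄) + acirc (cbr a₁ a₂) (cbr a₃ a₄) = 0 := by
    have e : acirc (cbr a₁ a₃) (cbr a₂ a₄) + acirc (cbr a₁ a₂) (cbr a₃ a₄) = a₁*(a₂*a₃*a₄ + a₂*a₄*a₃ + a₃*a₂*a₄ + a₃*a₄*a₂ + a₄*a₂*a₃ + a₄*a₃*a₂) + a₁*(a₂*a₃*a₄ + a₂*a₄*a₃ + a₃*a₂*a₄ + a₃*a₄*a₂ + a₄*a₂*a₃ + a₄*a₃*a₂) + (a₂*a₃*a₄ + a₂*a₄*a₃ + a₃*a₂*a₄ + a₃*a₄*a₂ + a₄*a₂*a₃ + a₄*a₃*a₂)*a₁ + (a₂*a₃*a₄ + a₂*a₄*a₃ + a₃*a₂*a₄ + a₃*a₄*a₂ + a₄*a₂*a₃ + a₄*a₃*a₂)*a₁ + a₂*(a₁*a₃*a₄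 + a₁*a₄*a₃ + a₃*a₁*a₄ + a₃*a₄*a₁ + a₄*a₁*a₃ + a₄*a₃*a₁) + (a₁*a₃*a₄ + a₁*a₄*a₃ + a₃*a₁*a₄ + a₃*a₄*a₁ + a₄*a₁*a₃ + a₄*a₃*a₁)*a₂ + a₃*(a₁*a₂*a₄ + a₁*a₄*a₂ + a₂*a₁*a₄ + a₂*a₄*a₁ + a₄*a₁*a₂ + a₄*a₂*a₁) + (a₁*a₂*a₄ + a₁*a₄*a₂ + a₂*a₁*a₄ + a₂*a₄*a₁ + a₄*a₁*a₂ + a₄*a₂*a₁)*a₃ + ((a₁*a₂)*a₃*a₄ + (a₁*a₂)*a₄*a₃ + a₃*(a₁*a₂)*a₄ + a₃*a₄*(a₁*a₂) + a₄*(a₁*a₂)*a₃ + a₄*a₃*(a₁*a₂)) + ((a₁*a₂)*a₃*a₄ + (a₁*a₂)*a₄*a₃ + a₃*(a₁*a₂)*a₄ + a₃*a₄*(a₁*a₂) + a₄*(a₁*a₂)*a₃ + a₄*a₃*(a₁*a₂)) + ((a₁*a₃)*a₂*a₄ + (a₁*a₃)*a₄*a₂ + a₂*(a₁*a₃)*a₄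 + a₂*a₄*(a₁*a₃) + a₄*(a₁*a₃)*a₂ + a₄*a₂*(a₁*a₃)) + ((a₁*a₃)*a₂*a₄ + (a₁*a₃)*a₄*a₂ + a₂*(a₁*a₃)*a₄ + a₂*a₄*(a₁*a₃) + a₄*(a₁*a₃)*a₂ + a₄*a₂*(a₁*a₃)) + ((a₂*a₁)*a₃*a₄ + (a₂*a₁)*a₄*a₃ + a₃*(a₂*a₁)*a₄ + a₃*a₄*(a₂*a₁) + a₄*(a₂*a₁)*a₃ + a₄*a₃*(a₂*a₁)) + ((a₂*a₁)*a₃*a₄ + (a₂*a₁)*a₄*a₃ + a₃*(a₂*a₁)*a₄ + a₃*a₄*(a₂*a₁) + a₄*(a₂*a₁)*a₃ + a₄*a₃*(a₂*a₁)) + ((a₃*a₁)*a₂*a₄ + (a₃*a₁)*a₄*a₂ + a₂*(a₃*a₁)*a₄ + a₂*a₄*(a₃*a₁) + a₄*(a₃*a₁)*a₂ + a₄*a₂*(a₃*a₁)) + ((a₃*a₁)*a₂*a₄ + (a₃*a₁)*a₄*a₂ + a₂*(a₃*a₁)*a₄ + a₂*a₄*(a₃*a₁) + a₄*(a₃*a₁)*a₂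 + a₄*a₂*(a₃*a₁)) + (-(a₁*a₃*a₂*a₄ + a₁*a₃*a₄*a₂ + a₁*a₃*a₄*a₂ + a₃*a₁*a₂*a₄ + a₃*a₁*a₂*a₄ + a₂*a₄*a₃*a₁ + a₂*a₄*a₃*a₁ + a₄*a₂*a₁*a₃ + a₄*a₂*a₁*a₃ + a₄*a₂*a₃*a₁ + a₁*a₂*a₃*a₄ + a₁*a₂*a₄*a₃ + a₁*a₂*a₄*a₃ + a₂*a₁*a₃*a₄ + a₂*a₁*a₃*a₄ + a₃*a₄*a₂*a₁ + a₃*a₄*a₂*a₁ + a₄*a₃*a₁*a₂ + a₄*a₃*a₁*a₂ + a₄*a₃*a₂*a₁ + a₁*a₄*a₂*a₃ + a₁*a₄*a₃*a₂ + a₂*a₃*a₄*a₁ + a₃*a₂*a₄*a₁ + a₂*a₃*a₁*a₄ + a₄*a₁*a₃*a₂ + a₃*a₁*a₄*a₂ + a₃*a₂*a₁*a₄ + a₃*a₄*a₁*a₂ + a₂*a₁*a₄*a₃ + a₂*a₄*a₁*a₃ + a₄*a₁*a₂*a₃) + -(a₁*a₃*a₂*a₄ + a₁*a₃*a₄*a₂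 + a₁*a₃*a₄*a₂ + a₃*a₁*a₂*a₄ + a₃*a₁*a₂*a₄ + a₂*a₄*a₃*a₁ + a₂*a₄*a₃*a₁ + a₄*a₂*a₁*a₃ + a₄*a₂*a₁*a₃ + a₄*a₂*a₃*a₁ + a₁*a₂*a₃*a₄ + a₁*a₂*a₄*a₃ + a₁*a₂*a₄*a₃ + a₂*a₁*a₃*a₄ + a₂*a₁*a₃*a₄ + a₃*a₄*a₂*a₁ + a₃*a₄*a₂*a₁ + a₄*a₃*a₁*a₂ + a₄*a₃*a₁*a₂ + a₄*a₃*a₂*a₁ + a₁*a₄*a₂*a₃ + a₁*a₄*a₃*a₂ + a₂*a₃*a₄*a₁ + a₃*a₂*a₄*a₁ + a₂*a₃*a₁*a₄ + a₄*a₁*a₃*a₂ + a₃*a₁*a₄*a₂ + a₃*a₂*a₁*a₄ + a₃*a₄*a₁*a₂ + a₂*a₁*a₄*a₃ + a₂*a₄*a₁*a₃ + a₄*a₁*a₂*a₃) + -(a₁*a₃*a₂*a₄ + a₁*a₃*a₄*a₂ + a₁*a₃*a₄*a₂ + a₃*a₁*a₂*a₄ + a₃*a₁*a₂*a₄ + a₂*a₄*a₃*a₁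 + a₂*a₄*a₃*a₁ + a₄*a₂*a₁*a₃ + a₄*a₂*a₁*a₃ + a₄*a₂*a₃*a₁ + a₁*a₂*a₃*a₄ + a₁*a₂*a₄*a₃ + a₁*a₂*a₄*a₃ + a₂*a₁*a₃*a₄ + a₂*a₁*a₃*a₄ + a₃*a₄*a₂*a₁ + a₃*a₄*a₂*a₁ + a₄*a₃*a₁*a₂ + a₄*a₃*a₁*a₂ + a₄*a₃*a₂*a₁ + a₁*a₄*a₂*a₃ + a₁*a₄*a₃*a₂ + a₂*a₃*a₄*a₁ + a₃*a₂*a₄*a₁ + a₂*a₃*a₁*a₄ + a₄*a₁*a₃*a₂ + a₃*a₁*a₄*a₂ + a₃*a₂*a₁*a₄ + a₃*a₄*a₁*a₂ + a₂*a₁*a₄*a₃ + a₂*a₄*a₁*a₃ + a₄*a₁*a₂*a₃)) := by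
      simp only [acirc, cbr]
      noncomm_ring
    rw [e, hid a₂ a₃ a₄, hid a₁ a₃ a₄, hid a₁ a₂ a₄, hid (a₁*a₂) a₃ a₄, hid (a₁*a₃) a₂ a₄, hid (a₂*a₁) a₃ a₄, hid (a₃*a₁) a₂ a₄]
    simp only [mul_zero, zero_mul, add_zero, zero_add]
    rw [h3]
  exact ⟨keyt1, keyt2⟩
end

section
/- Let A be an associative algebra over a field of characteristic different from 2 and 3, such that the halved commutator bracket [x,y] = (xy − yx)/2 satisfies [[a₁,a₂],a₃] + [[a₁,a₃],a₂] = 0 for all elements. Then the symmetrized product x·y = (xy + yx)/2 is associative on A: (a₁·a₂)·a₃ = a₁·(a₂·a₃) for all a₁, a₂, a₃ ∈ A. -/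
lemma br_antisymm {K A : Type*} [Field K] [NonUnitalRing A] [Module K A] (a b : A) :
    br K a b = - br K b a := by
  simp only [br]
  rw [← smul_neg, neg_sub]

lemma br_neg_left {K A : Type*} [Field K] [NonUnitalRing A] [Module K A] (a b : A) :
    br K (-a) b = - br K a b := by
  simp only [br, neg_mul, mul_neg, ← smul_neg]
  congr 1
  abel

lemma br_expand {K A : Type*} [Field K] [NonUnitalRing A] [Module K A]
    [IsScalarTower K A A] [SMulCommClass K A A] (a b c : A) :
    br K (br K a b) c = ((2:K)⁻¹*(2:K)⁻¹) •
      (a*b*c - b*a*c - c*(a*b) + c*(b*a)) := by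
  simp only [br, smul_sub, sub_mul, mul_sub, smul_mul_assoc, mul_smul_comm, smul_smul,
    smul_add, sub_add]

lemma br_jacobi {K A : Type*} [Field K] [NonUnitalRing A] [Module K A]
    [IsScalarTower K A A] [SMulCommClass K A A] (a b c : A) :
    br K (br K a b) c + br K (br K b c) a + br K (br K c a) b = 0 := by
  simp only [br_expand]
  rw [← smul_add, ← smul_add]
  convert smul_zero ((2:K)⁻¹*(2:K)⁻¹) using 2
  simp only [mul_assoc]
  abel

theorem stmt_18 (K A : Type*) [Field K] (h2 : (2 : K) ≠ 0) (h3 : (3 : K) ≠ 0)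
    [NonUnitalRing A] [Module K A] [IsScalarTower K A A] [SMulCommClass K A A]
    (hid : ∀ a b c : A, br K (br K a b) c + br K (br K a c) b = 0) :
    ∀ a₁ a₂ a₃ : A, dot K (dot K a₁ a₂) a₃ = dot K a₁ (dot K a₂ a₃) := by
  have hid' : ∀ a b c : A, br K (br K a b) c = - br K (br K a c) b := fun a b c =>
    eq_neg_of_add_eq_zero_left (hid a b c)
  have hanti : ∀ a b c : A, br K (br K a b) c = - br K (br K b a) c := fun a b c => by
    rw [br_antisymm a b, br_neg_left]
  have hcyc : ∀ a b c : A, br K (br K a b) c = br K (br K c a) b := fun a b c => by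
    rw [hid' a b c, hanti a c b, neg_neg]
  have hT : ∀ a b c : A, br K (br K a b) c = 0 := by
    intro a b c
    have hJ := br_jacobi (K := K) a b c
    rw [hcyc b c a, ← hcyc a b c] at hJ
    have h3' : (3:K) • br K (br K a b) c = 0 := by
      rw [show (3:K) = 1+1+1 by norm_num]
      simp only [add_smul, one_smul]
      exact hJ
    have := congrArg (fun x => (3:K)⁻¹ • x) h3'
    simpa [smul_smul, inv_mul_cancel₀ h3] using this
  intro a b c
  have key : dot K (dot K a b) c - dot K a (dot K b c) = br K (br K c a) b := by
    simp only [dot, br, smul_add, smul_sub, add_mul, mul_add, sub_mul, mul_sub,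
      smul_mul_assoc, mul_smul_comm, smul_smul, mul_assoc]
    module
  rw [hT c a b] at key
  exact sub_eq_zero.mp key
end
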